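/- Suppose a : (0,1] → ℝ is left-continuous, nondecreasing, bounded, b : (0,1] → ℝ is left-continuous, nonincreasing, bounded, a(1) ≤ b(1), and both a and b are right-continuous at 0 (when extended by their limits). Then there exists a unique fuzzy number u such that [u]_α = [a(α), b(α)] for every α ∈ (0,1]. -/
import Mathlib


open Set Filter Topology

structure FuzzyNumber where
  u : ℝ → ℝ
  mem_unit : ∀ x, u x ∈ Set.Icc (0:ℝ) 1
  lo : ℝ → ℝ
  hi : ℝ → ℝ
  cut_eq : ∀ α ∈ Set.Ioc (0:ℝ) 1, {x | α ≤ u x} = Set.Icc (lo α) (hi α)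
  cut0_eq : closure {x | 0 < u x} = Set.Icc (lo 0) (hi 0)
  one_cut_nonempty : ∃ x, 1 ≤ u x

noncomputable def dInf (u v : FuzzyNumber) : ℝ :=
  ⨆ α : Set.Icc (0:ℝ) 1, max |u.lo α - v.lo α| |u.hi α - v.hi α|

noncomputable def conv (u v : ℝ → ℝ) (x : ℝ) : ℝ :=
  ⨆ y : ℝ, min (u y) (v (x - y))

noncomputable def wp (p x : ℝ) : ℝ :=
  if x ∈ Set.Icc (-p) p then 1 - (x / p) ^ 2 else 0

def FuzzyNumber.IsDifferentiable (v : FuzzyNumber) : Prop :=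
  ∀ x ∈ Set.Ioo (v.lo 0) (v.hi 0), DifferentiableAt ℝ v.u x

/-- The level set of parameters whose interval contains `x`. -/
def gvT (a b : ℝ → ℝ) (x : ℝ) : Set ℝ :=
  {α | α ∈ Set.Ioc (0:ℝ) 1 ∧ a α ≤ x ∧ x ≤ b α}

/-- The candidate membership function. -/
noncomputable def gvMem (a b : ℝ → ℝ) (x : ℝ) : ℝ :=
  sSup (insert 0 (gvT a b x))

lemma gv_bddAbove (a b : ℝ → ℝ) (x : ℝ) : BddAbove (insert 0 (gvT a b x)) := by
  refine ⟨1, ?_⟩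
  rintro γ (rfl | hγ)
  · exact zero_le_one
  · exact hγ.1.2

lemma gv_nonempty (a b : ℝ → ℝ) (x : ℝ) : (insert 0 (gvT a b x)).Nonempty :=
  ⟨0, Set.mem_insert _ _⟩

lemma gvMem_nonneg (a b : ℝ → ℝ) (x : ℝ) : 0 ≤ gvMem a b x :=
  le_csSup (gv_bddAbove a b x) (Set.mem_insert _ _)

lemma gvMem_le_one (a b : ℝ → ℝ) (x : ℝ) : gvMem a b x ≤ 1 := by
  refine csSup_le (gv_nonempty a b x) ?_
  rintro γ (rfl | hγ)
  · exact zero_le_one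
  · exact hγ.1.2

theorem stmt3 (a b : ℝ → ℝ)
    (ha_mono : MonotoneOn a (Set.Ioc (0:ℝ) 1))
    (ha_lc : ∀ α ∈ Set.Ioc (0:ℝ) 1,
      Filter.Tendsto a (nhdsWithin α (Set.Iio α)) (nhds (a α)))
    (ha_bdd : BddAbove (a '' Set.Ioc (0:ℝ) 1) ∧ BddBelow (a '' Set.Ioc (0:ℝ) 1))
    (hb_anti : AntitoneOn b (Set.Ioc (0:ℝ) 1))
    (hb_lc : ∀ α ∈ Set.Ioc (0:ℝ) 1,
      Filter.Tendsto b (nhdsWithin α (Set.Iio α)) (nhds (b α)))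
    (hb_bdd : BddAbove (b '' Set.Ioc (0:ℝ) 1) ∧ BddBelow (b '' Set.Ioc (0:ℝ) 1))
    (hab : a 1 ≤ b 1)
    (ha0 : Filter.Tendsto a (nhdsWithin 0 (Set.Ioi 0)) (nhds (a 0)))
    (hb0 : Filter.Tendsto b (nhdsWithin 0 (Set.Ioi 0)) (nhds (b 0))) :
    ∃ u : FuzzyNumber, (∀ α ∈ Set.Ioc (0:ℝ) 1, u.lo α = a α ∧ u.hi α = b α) ∧
      ∀ v : FuzzyNumber,
        (∀ α ∈ Set.Ioc (0:ℝ) 1, v.lo α = a α ∧ v.hi α = b α) → v.u = u.u := by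
  classical
  -- key characterization of α-cuts
  have key : ∀ x α, α ∈ Set.Ioc (0:ℝ) 1 → (α ≤ gvMem a b x ↔ a α ≤ x ∧ x ≤ b α) := by
    intro x α hα
    constructor
    · intro hle
      have hβab : ∀ β ∈ Set.Ioo (0:ℝ) α, a β ≤ x ∧ x ≤ b β := by
        intro β hβ
        obtain ⟨γ, hγS, hβγ⟩ :=
          exists_lt_of_lt_csSup (gv_nonempty a b x) (lt_of_lt_of_le hβ.2 hle)
        have hγT : γ ∈ gvT a b x := by
          rcases hγS with rfl | h
          · exact absurd hβγ (not_lt.2 hβ.1.le)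
          · exact h
        have hβ1 : β ∈ Set.Ioc (0:ℝ) 1 := ⟨hβ.1, hβ.2.le.trans hα.2⟩
        exact ⟨(ha_mono hβ1 hγT.1 hβγ.le).trans hγT.2.1,
               hγT.2.2.trans (hb_anti hβ1 hγT.1 hβγ.le)⟩
      have hmem : Set.Ioo (0:ℝ) α ∈ nhdsWithin α (Set.Iio α) :=
        Ioo_mem_nhdsLT_of_mem ⟨hα.1, le_refl α⟩
      constructor
      · exact le_of_tendsto (ha_lc α hα)
          (Filter.eventually_of_mem hmem fun β hβ => (hβab β hβ).1)
      · exact ge_of_tendsto (hb_lc α hα)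
          (Filter.eventually_of_mem hmem fun β hβ => (hβab β hβ).2)
    · intro h
      exact le_csSup (gv_bddAbove a b x) (Set.mem_insert_of_mem _ ⟨hα, h⟩)
  have aab : ∀ α ∈ Set.Ioc (0:ℝ) 1, a α ≤ b α := by
    intro α hα
    have h1 : (1:ℝ) ∈ Set.Ioc (0:ℝ) 1 := ⟨one_pos, le_refl 1⟩
    exact (ha_mono hα h1 hα.2).trans (hab.trans (hb_anti hα h1 hα.2))
  have ha0le : ∀ α ∈ Set.Ioc (0:ℝ) 1, a 0 ≤ a α := by
    intro α hα
    refine le_of_tendsto ha0 ?_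
    filter_upwards [Ioo_mem_nhdsGT_of_mem ⟨le_refl (0:ℝ), hα.1⟩] with β hβ
    exact ha_mono ⟨hβ.1, hβ.2.le.trans hα.2⟩ hα hβ.2.le
  have hb0ge : ∀ α ∈ Set.Ioc (0:ℝ) 1, b α ≤ b 0 := by
    intro α hα
    refine ge_of_tendsto hb0 ?_
    filter_upwards [Ioo_mem_nhdsGT_of_mem ⟨le_refl (0:ℝ), hα.1⟩] with β hβ
    exact hb_anti ⟨hβ.1, hβ.2.le.trans hα.2⟩ hα hβ.2.le
  have hab0 : a 0 ≤ b 0 := by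
    refine le_of_tendsto_of_tendsto ha0 hb0 ?_
    filter_upwards [Ioo_mem_nhdsGT_of_mem ⟨le_refl (0:ℝ), one_pos⟩] with β hβ
    exact aab β ⟨hβ.1, hβ.2.le⟩
  -- positivity characterization
  have hpos : ∀ x, 0 < gvMem a b x ↔ (gvT a b x).Nonempty := by
    intro x
    constructor
    · intro h
      by_contra hempty
      rw [Set.not_nonempty_iff_eq_empty] at hempty
      have hS : insert (0:ℝ) (gvT a b x) = {0} := by rw [hempty]; simp
      rw [gvMem, hS, csSup_singleton] at h
      exact lt_irrefl 0 h
    · rintro ⟨γ, hγ⟩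
      exact lt_of_lt_of_le hγ.1.1
        (le_csSup (gv_bddAbove a b x) (Set.mem_insert_of_mem _ hγ))
  -- closure of the support
  have hUIcc : {x | 0 < gvMem a b x} ⊆ Set.Icc (a 0) (b 0) := by
    intro x hx
    obtain ⟨γ, hγ⟩ := (hpos x).1 hx
    exact ⟨(ha0le γ hγ.1).trans hγ.2.1, hγ.2.2.trans (hb0ge γ hγ.1)⟩
  have hIooU : Set.Ioo (a 0) (b 0) ⊆ {x | 0 < gvMem a b x} := by
    intro x hx
    have h1 : ∀ᶠ β in nhdsWithin 0 (Set.Ioi 0), a β < x :=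
      ha0.eventually_lt_const hx.1
    have h2 : ∀ᶠ β in nhdsWithin 0 (Set.Ioi 0), x < b β :=
      hb0.eventually_const_lt hx.2
    have h3 : ∀ᶠ β in nhdsWithin 0 (Set.Ioi 0), β ∈ Set.Ioo (0:ℝ) 1 :=
      Filter.eventually_of_mem (Ioo_mem_nhdsGT_of_mem ⟨le_refl (0:ℝ), one_pos⟩)
        fun β hβ => hβ
    obtain ⟨β, hβ1, hβ2, hβ3⟩ := (h1.and (h2.and h3)).exists
    exact (hpos x).2 ⟨β, ⟨hβ3.1, hβ3.2.le⟩, hβ1.le, hβ2.le⟩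
  have hclos : closure {x | 0 < gvMem a b x} = Set.Icc (a 0) (b 0) := by
    rcases eq_or_lt_of_le hab0 with heq | hlt
    · have hU1 : a 1 ∈ {x | 0 < gvMem a b x} :=
        (hpos (a 1)).2 ⟨1, ⟨one_pos, le_refl 1⟩, le_refl _, hab⟩
      have hsub : {x | 0 < gvMem a b x} ⊆ {a 0} := by
        intro x hx
        have := hUIcc hx
        rw [← heq] at this
        exact Set.mem_singleton_iff.2 (le_antisymm this.2 this.1)
      have hsup : {x | 0 < gvMem a b x} = {a 0} :=
        hsub.antisymm (by
          rintro x rfl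
          have := hUIcc hU1
          rw [← heq] at this
          have : a 1 = a 0 := le_antisymm this.2 this.1
          rwa [← this])
      rw [hsup, closure_singleton, ← heq, Set.Icc_self]
    · apply le_antisymm
      · exact closure_minimal hUIcc isClosed_Icc
      · calc Set.Icc (a 0) (b 0) = closure (Set.Ioo (a 0) (b 0)) :=
              (closure_Ioo hlt.ne).symm
          _ ⊆ closure {x | 0 < gvMem a b x} := closure_mono hIooU
  -- the fuzzy number
  refine ⟨⟨gvMem a b, fun x => ⟨gvMem_nonneg a b x, gvMem_le_one a b x⟩, a, b,
      ?_, hclos, ⟨a 1, ?_⟩⟩, fun α hα => ⟨rfl, rfl⟩, ?_⟩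
  · intro α hα
    ext x
    simpa using key x α hα
  · exact (key (a 1) 1 ⟨one_pos, le_refl 1⟩).2 ⟨le_refl _, hab⟩
  · -- uniqueness
    intro v hv
    funext x
    have hcut : ∀ γ ∈ Set.Ioc (0:ℝ) 1, {y | γ ≤ v.u y} = Set.Icc (a γ) (b γ) := by
      intro γ hγ
      rw [v.cut_eq γ hγ, (hv γ hγ).1, (hv γ hγ).2]
    apply le_antisymm
    · rcases lt_or_ge 0 (v.u x) with hvx | hvx
      · have hγ : v.u x ∈ Set.Ioc (0:ℝ) 1 := ⟨hvx, (v.mem_unit x).2⟩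
        have hx : x ∈ Set.Icc (a (v.u x)) (b (v.u x)) := by
          rw [← hcut _ hγ]; exact Set.mem_setOf.2 le_rfl
        exact le_csSup (gv_bddAbove a b x) (Set.mem_insert_of_mem _ ⟨hγ, hx.1, hx.2⟩)
      · exact hvx.trans (gvMem_nonneg a b x)
    · refine csSup_le (gv_nonempty a b x) ?_
      rintro γ (rfl | hγ)
      · exact (v.mem_unit x).1
      · have : x ∈ {y | γ ≤ v.u y} := by
          rw [hcut γ hγ.1]; exact ⟨hγ.2.1, hγ.2.2⟩
        exact this
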